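/- Let ξ = 0 (exponential limit) and let G be the EGP3(κ,σ,0) distribution function G(x) = (1 - e^{-x/σ})^κ for x > 0, with reciprocal hazard h(x) = (1-G(x))/G'(x). Then lim_{x→∞} h'(x) = 0; that is, EGP3 with ξ = 0 satisfies the von Mises condition with tail index 0. -/

import Mathlib

/-!
Write `u = e^{-x/σ}`. Since `h = (1 - G)/g` with `G' = g`, one has `h' = -1 - h · g'/g`. As
`x → ∞`, `u → 0⁺`; the log-derivative `g'/g = (κ - 1)u/(σ(1 - u)) - 1/σ` tends to `-1/σ`, and
`h = (1 - (1 - u)^κ)/u / (κ/σ · (1 - u)^{κ-1})` tends to `κ/(κ/σ) = σ`, the first factor being a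
difference quotient of `v ↦ 1 - (1 - v)^κ` at `0`. Hence `h' → -1 + σ/σ = 0`.
-/

open Filter Topology Real

lemma hasDerivAt_one_sub_div_of_hasDerivAt {G g : ℝ → ℝ} {x g' : ℝ}
    (hG : HasDerivAt G (g x) x) (hg : HasDerivAt g g' x) (hx : g x ≠ 0) :
    HasDerivAt (fun y => (1 - G y) / g y) (-1 - (1 - G x) / g x * (g' / g x)) x := by
  refine ((hG.const_sub 1).div hg hx).congr_deriv ?_
  field_simp

lemma hasDerivAt_exp_neg_div (σ x : ℝ) :
    HasDerivAt (fun y => exp (-y / σ)) (-exp (-x / σ) / σ) x := by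
  refine (((hasDerivAt_neg' x).div_const σ).exp).congr_deriv ?_
  ring

lemma tendsto_exp_neg_div_atTop_nhdsGT {σ : ℝ} (hσ : 0 < σ) :
    Tendsto (fun x => exp (-x / σ)) atTop (𝓝[>] 0) := by
  simp only [neg_div]
  exact tendsto_exp_atBot_nhdsGT.comp (tendsto_neg_atTop_atBot.comp (tendsto_id.atTop_div_const hσ))

lemma tendsto_one_sub_one_sub_rpow_div (κ : ℝ) :
    Tendsto (fun v => (1 - (1 - v) ^ κ) / v) (𝓝[≠] 0) (𝓝 κ) := by
  have hφ : HasDerivAt (fun v : ℝ => 1 - (1 - v) ^ κ) κ 0 := by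
    refine ((hasDerivAt_const (0 : ℝ) 1).sub
      (((hasDerivAt_const (0 : ℝ) 1).sub (hasDerivAt_id 0)).rpow_const (p := κ)
        (Or.inl (by norm_num)))).congr_deriv ?_
    simp
  refine hφ.tendsto_slope.congr fun v => ?_
  simp [slope_def_field]

section EGP3

variable {κ σ : ℝ}

lemma hasDerivAt_egp3_cdf {x : ℝ} (hx : 1 - exp (-x / σ) ≠ 0) :
    HasDerivAt (fun y => (1 - exp (-y / σ)) ^ κ)
      (κ / σ * (1 - exp (-x / σ)) ^ (κ - 1) * exp (-x / σ)) x := by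
  refine (((hasDerivAt_exp_neg_div σ x).const_sub 1).rpow_const (p := κ)
    (Or.inl hx)).congr_deriv ?_
  ring

lemma hasDerivAt_egp3_density {x : ℝ} (hσ : σ ≠ 0) (hx : 1 - exp (-x / σ) ≠ 0) :
    HasDerivAt (fun y => κ / σ * (1 - exp (-y / σ)) ^ (κ - 1) * exp (-y / σ))
      (κ / σ * (1 - exp (-x / σ)) ^ (κ - 1) * exp (-x / σ) *
        ((κ - 1) * exp (-x / σ) / (σ * (1 - exp (-x / σ))) - 1 / σ)) x := by
  refine (((((hasDerivAt_exp_neg_div σ x).const_sub 1).rpow_const (p := κ - 1)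
    (Or.inl hx)).const_mul (κ / σ)).mul (hasDerivAt_exp_neg_div σ x)).congr_deriv ?_
  rw [rpow_sub_one hx]
  field_simp
  ring

lemma tendsto_egp3_reciprocalHazard (hκ : κ ≠ 0) (hσ : σ ≠ 0) :
    Tendsto (fun u => (1 - (1 - u) ^ κ) / (κ / σ * (1 - u) ^ (κ - 1) * u)) (𝓝[≠] 0) (𝓝 σ) := by
  have hpow : Tendsto (fun u : ℝ => κ / σ * (1 - u) ^ (κ - 1)) (𝓝[≠] 0) (𝓝 (κ / σ)) := by
    have : ContinuousAt (fun u : ℝ => κ / σ * (1 - u) ^ (κ - 1)) 0 :=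
      (continuousAt_const.sub continuousAt_id).rpow_const (Or.inl (by norm_num)) |>.const_mul _
    simpa using this.tendsto.mono_left nhdsWithin_le_nhds
  have := (tendsto_one_sub_one_sub_rpow_div κ).div hpow (by positivity)
  rw [div_div_eq_mul_div, mul_div_cancel_left₀ _ hκ] at this
  refine this.congr fun u => ?_
  simp only [Pi.div_apply]
  ring

lemma tendsto_egp3_logDeriv_density (hσ : σ ≠ 0) :
    Tendsto (fun u => (κ - 1) * u / (σ * (1 - u)) - 1 / σ) (𝓝 0) (𝓝 (-1 / σ)) := by
  have : ContinuousAt (fun u : ℝ => (κ - 1) * u / (σ * (1 - u)) - 1 / σ) 0 := by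
    fun_prop (disch := simpa)
  simpa [neg_div] using this.tendsto

end EGP3

/-- The EGP3(κ,σ,0) distribution `G(x) = (1 - e^{-x/σ})^κ` satisfies the von Mises condition
with tail index 0: the derivative of its reciprocal hazard function `h = (1-G)/g` tends to 0
at infinity. -/
theorem egp3_xi_zero_von_mises (κ σ : ℝ) (hκ : 0 < κ) (hσ : 0 < σ)
    (G g h : ℝ → ℝ)
    (hG : ∀ x : ℝ, G x = (1 - Real.exp (-x / σ)) ^ κ)
    (hg : ∀ x : ℝ, g x =
      κ / σ * (1 - Real.exp (-x / σ)) ^ (κ - 1) * Real.exp (-x / σ))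
    (hh : ∀ x : ℝ, h x = (1 - G x) / g x) :
    Tendsto (fun x : ℝ => deriv h x) atTop (𝓝 0) := by
  have hh' : h = fun x => (1 - (1 - exp (-x / σ)) ^ κ) /
      (κ / σ * (1 - exp (-x / σ)) ^ (κ - 1) * exp (-x / σ)) :=
    funext fun x => by rw [hh, hG, hg]
  have hu := tendsto_exp_neg_div_atTop_nhdsGT hσ
  have hderiv : ∀ᶠ x in atTop, deriv h x =
      -1 - h x * ((κ - 1) * exp (-x / σ) / (σ * (1 - exp (-x / σ))) - 1 / σ) := by
    filter_upwards [hu self_mem_nhdsWithin, hu (Iio_mem_nhds one_pos |> nhdsWithin_le_nhds)]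
      with x (hx₀ : 0 < exp (-x / σ)) (hx₁ : exp (-x / σ) < 1)
    have hx : 1 - exp (-x / σ) ≠ 0 := by linarith
    rw [hh']
    refine (hasDerivAt_one_sub_div_of_hasDerivAt (hasDerivAt_egp3_cdf hx)
      (hasDerivAt_egp3_density hσ.ne' hx) (by positivity)).deriv.trans ?_
    field_simp
  have hh_lim : Tendsto h atTop (𝓝 σ) := by
    rw [hh']
    exact (tendsto_egp3_reciprocalHazard hκ.ne' hσ.ne').comp
      (hu.mono_right (nhdsWithin_mono _ fun _ hv => ne_of_gt hv))
  have hq_lim := (tendsto_egp3_logDeriv_density (κ := κ) hσ.ne').comp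
    (hu.mono_right nhdsWithin_le_nhds)
  have hlim := (tendsto_const_nhds (x := (-1 : ℝ))).sub (hh_lim.mul hq_lim)
  rw [show -1 - σ * (-1 / σ) = 0 by field_simp; ring] at hlim
  exact hlim.congr' (hderiv.mono fun _ hx => hx.symm)
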